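/- In the multi-rater setting, a diagonal basic move does not decrease the multi-rater observed agreement: if m is a basic move with +1 at the diagonal cells (i,i,...,i) and (j,j,...,j) with i ≠ j, and n + m is entrywise nonnegative, then A_{o,w}(n+m) ≥ A_{o,w}(n). -/

import Mathlib

/-!
Two-way margins are linear in the table, so `A(n + m) = A(n) + A(m)`. Summing the weights
against the `(u, v)` margin of `m` gives `∑ z, w (z u) (z v) * m z
= w i i + w j j - w (y u) (y v) - w (y' u) (y' v)`, which is `≥ 0` because the two diagonal
weights are `1` and every weight is at most `1`.
-/

open Finset

/-- The pairwise weighted observed agreement `A_{o,w}` of an `r`-way table with total count `N`. -/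
noncomputable def pairwiseAgreement {α : Type*} [Fintype α] [DecidableEq α] (r N : ℕ)
    (w : α → α → ℝ) (tab : (Fin r → α) → ℤ) : ℝ :=
  (2 / ((r : ℝ) * ((r : ℝ) - 1))) *
    ∑ uv ∈ univ.filter (fun uv : Fin r × Fin r => uv.1 < uv.2),
      (1 / (N : ℝ)) * ∑ a : α, ∑ b : α, w a b *
        ((∑ z ∈ univ.filter (fun z : Fin r → α => z uv.1 = a ∧ z uv.2 = b), tab z : ℤ) : ℝ)

def basicMove {β : Type*} [DecidableEq β] (x x' y y' : β) (z : β) : ℤ :=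
  (if z = x then 1 else 0) + (if z = x' then 1 else 0)
    - (if z = y then 1 else 0) - (if z = y' then 1 else 0)

theorem natCast_mul_natCast_sub_one_nonneg (r : ℕ) : 0 ≤ (r : ℝ) * ((r : ℝ) - 1) := by
  rcases r with _ | r
  · simp
  · simp only [Nat.cast_succ, add_sub_cancel_right]
    positivity

theorem sum_weight_mul_margin {γ α : Type*} [Fintype γ] [Fintype α] [DecidableEq α]
    (w : α → α → ℝ) (p q : γ → α) (t : γ → ℤ) :
    ∑ a : α, ∑ b : α, w a b * ((∑ z ∈ univ.filter (fun z => p z = a ∧ q z = b), t z : ℤ) : ℝ)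
      = ∑ z, w (p z) (q z) * t z := by
  rw [← sum_fiberwise univ (fun z => (p z, q z)), Fintype.sum_prod_type]
  refine sum_congr rfl fun a _ => sum_congr rfl fun b _ => ?_
  rw [Int.cast_sum, mul_sum]
  refine sum_congr (by simp) fun z hz => ?_
  obtain ⟨rfl, rfl⟩ := (mem_filter.1 hz).2
  rfl

theorem sum_mul_basicMove {β : Type*} [Fintype β] [DecidableEq β] (f : β → ℝ) (x x' y y' : β) :
    ∑ z, f z * basicMove x x' y y' z = f x + f x' - f y - f y' := by
  simp [basicMove, mul_add, mul_sub, sum_add_distrib, sum_sub_distrib]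

section pairwiseAgreement

variable {α : Type*} [Fintype α] [DecidableEq α] {r N : ℕ} {w : α → α → ℝ}

theorem pairwiseAgreement_add (t t' : (Fin r → α) → ℤ) :
    pairwiseAgreement r N w (t + t') = pairwiseAgreement r N w t + pairwiseAgreement r N w t' := by
  simp only [pairwiseAgreement, Pi.add_apply, sum_add_distrib, Int.cast_add, mul_add]

theorem pairwiseAgreement_nonneg {tab : (Fin r → α) → ℤ}
    (h : ∀ u v, 0 ≤ ∑ z, w (z u) (z v) * tab z) : 0 ≤ pairwiseAgreement r N w tab := by
  unfold pairwiseAgreement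
  have hr := natCast_mul_natCast_sub_one_nonneg r
  refine mul_nonneg (by positivity) (sum_nonneg fun uv _ => mul_nonneg (by positivity) ?_)
  rw [sum_weight_mul_margin]
  exact h uv.1 uv.2

end pairwiseAgreement

theorem multirater_diagonal_move_increases_agreement_general (r k : ℕ)
    (i j : Fin k)
    (S : Finset (Fin r))
    (n : (Fin r → Fin k) → ℕ) (N : ℕ)
    (w : Fin k → Fin k → ℝ)
    (hdiag : ∀ a, w a a = 1)
    (hle : ∀ a b, w a b ≤ 1) :
    let x : Fin r → Fin k := fun _ => i
    let x' : Fin r → Fin k := fun _ => j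
    let y : Fin r → Fin k := fun s => if s ∈ S then x s else x' s
    let y' : Fin r → Fin k := fun s => if s ∈ S then x' s else x s
    let m : (Fin r → Fin k) → ℤ := fun z =>
      (if z = x then 1 else 0) + (if z = x' then 1 else 0)
        - (if z = y then 1 else 0) - (if z = y' then 1 else 0)
    let A : ((Fin r → Fin k) → ℤ) → ℝ := fun tab =>
      (2 / ((r : ℝ) * ((r : ℝ) - 1))) *
        ∑ uv ∈ Finset.univ.filter (fun uv : Fin r × Fin r => uv.1 < uv.2),
          (1 / (N : ℝ)) * ∑ a : Fin k, ∑ b : Fin k, w a b *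
            ((∑ z ∈ Finset.univ.filter
                (fun z : Fin r → Fin k => z uv.1 = a ∧ z uv.2 = b), tab z : ℤ) : ℝ)
    (∀ z : Fin r → Fin k, 0 ≤ (n z : ℤ) + m z) →
    A (fun z => (n z : ℤ) + m z) ≥ A (fun z => (n z : ℤ)) := by
  intro x x' y y' m A _
  change pairwiseAgreement r N w ((fun z => (n z : ℤ)) + basicMove x x' y y')
    ≥ pairwiseAgreement r N w (fun z => (n z : ℤ))
  rw [pairwiseAgreement_add]
  refine le_add_of_nonneg_right (pairwiseAgreement_nonneg fun u v => ?_)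
  rw [sum_mul_basicMove]
  simp only [x, x', hdiag]
  linarith [hle (y u) (y v), hle (y' u) (y' v)]

/-- In the multi-rater setting, a diagonal basic move (with `+1` at the diagonal
cells `(i,...,i)` and `(j,...,j)`, `i ≠ j`) does not decrease the pairwise weighted
observed agreement, provided `n + m` is entrywise nonnegative. -/
theorem multirater_diagonal_move_increases_agreement (r k : ℕ) (hr : 2 ≤ r)
    (i j : Fin k) (hij : i ≠ j)
    (S : Finset (Fin r)) (hSne : S.Nonempty) (hSproper : S ≠ Finset.univ)
    (n : (Fin r → Fin k) → ℕ) (N : ℕ) (hN : 0 < N)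
    (htot : ∑ z : Fin r → Fin k, n z = N)
    (w : Fin k → Fin k → ℝ)
    (hdiag : ∀ a, w a a = 1)
    (hle : ∀ a b, w a b ≤ 1) :
    let x : Fin r → Fin k := fun _ => i
    let x' : Fin r → Fin k := fun _ => j
    let y : Fin r → Fin k := fun s => if s ∈ S then x s else x' s
    let y' : Fin r → Fin k := fun s => if s ∈ S then x' s else x s
    let m : (Fin r → Fin k) → ℤ := fun z =>
      (if z = x then 1 else 0) + (if z = x' then 1 else 0)
        - (if z = y then 1 else 0) - (if z = y' then 1 else 0)
    let A : ((Fin r → Fin k) → ℤ) → ℝ := fun tab =>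
      (2 / ((r : ℝ) * ((r : ℝ) - 1))) *
        ∑ uv ∈ Finset.univ.filter (fun uv : Fin r × Fin r => uv.1 < uv.2),
          (1 / (N : ℝ)) * ∑ a : Fin k, ∑ b : Fin k, w a b *
            ((∑ z ∈ Finset.univ.filter
                (fun z : Fin r → Fin k => z uv.1 = a ∧ z uv.2 = b), tab z : ℤ) : ℝ)
    (∀ z : Fin r → Fin k, 0 ≤ (n z : ℤ) + m z) →
    A (fun z => (n z : ℤ) + m z) ≥ A (fun z => (n z : ℤ)) :=
  multirater_diagonal_move_increases_agreement_general r k i j S n N w hdiag hle
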